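/- Let G be a finite simple graph on vertices {1,…,n} with ordered edge set E, |E| > 0, which is vertex transitive and edge transitive, and let t ∈ [0,1]. Let S be the set of real numbers s such that max{0, |E|(2t−1)} ≤ s ≤ |E|·t and there exists a positive semidefinite real (n+1)×(n+1) matrix P = [p_{ij}]_{0≤i,j≤n} with p_{00} = 1; p_{0j} = p_{j0} = t and p_{jj} = t for all 1 ≤ j ≤ n; max{0, 2t−1} ≤ p_{ij} ≤ t for all 1 ≤ i,j ≤ n with i ≠ j; and p_{ij} = s/|E| for all (i,j) ∈ E. Then S is nonempty and f_vect(t) = min S. -/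

import Mathlib

open scoped BigOperators

/-- A correlation with `n` inputs and `2` outputs: `p i j v w` is `p(i,j|v,w)`. -/
abbrev Corr (n : ℕ) := Fin 2 → Fin 2 → Fin n → Fin n → ℝ

/-- Synchronous correlation (for two outputs). -/
def IsSync {n : ℕ} (p : Corr n) : Prop :=
  ∀ v, p 0 1 v v = 0 ∧ p 1 0 v v = 0

/-- Both marginals of outcome `0` are constantly equal to `t`. -/
def HasMarginals {n : ℕ} (p : Corr n) (t : ℝ) : Prop :=
  (∀ v w, ∑ j, p 0 j v w = t) ∧ (∀ v w, ∑ i, p i 0 v w = t)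

/-- The (ordered) edge set of a graph `G` on `Fin n`, as a finset of ordered pairs. -/
def edgeFinset' {n : ℕ} (G : SimpleGraph (Fin n)) [DecidableRel G.Adj] :
    Finset (Fin n × Fin n) :=
  Finset.univ.filter fun vw : Fin n × Fin n => G.Adj vw.1 vw.2

/-- `F(p) = Σ_{(v,w) ∈ E} p(0,0|v,w)`. -/
def Fval {n : ℕ} (G : SimpleGraph (Fin n)) [DecidableRel G.Adj] (p : Corr n) : ℝ :=
  ∑ vw ∈ edgeFinset' G, p 0 0 vw.1 vw.2

/-- A realization of `p` as a vectorial correlation, in a real Hilbert space. -/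
structure VectRealization (n : ℕ) (p : Corr n) where
  H : Type
  [nacg : NormedAddCommGroup H]
  [ips : InnerProductSpace ℝ H]
  x : Fin n → Fin 2 → H
  y : Fin n → Fin 2 → H
  h : H
  hnorm : ‖h‖ = 1
  hxorth : ∀ v, inner ℝ (x v 0) (x v 1) = (0 : ℝ)
  hyorth : ∀ w, inner ℝ (y w 0) (y w 1) = (0 : ℝ)
  hxsum : ∀ v, x v 0 + x v 1 = h
  hysum : ∀ w, y w 0 + y w 1 = h
  hval : ∀ i j v w, p i j v w = inner ℝ (x v i) (y w j)
  hnn : ∀ i j v w, 0 ≤ p i j v w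

/-- `p` is a vectorial correlation. -/
def IsVect {n : ℕ} (p : Corr n) : Prop := Nonempty (VectRealization n p)

/-- `f_vect(t)` for the graph `G`: the infimum of `F(p)` over synchronous vectorial
correlations `p` whose marginals of outcome `0` are constantly equal to `t`. -/
noncomputable def fvect {n : ℕ} (G : SimpleGraph (Fin n)) [DecidableRel G.Adj] (t : ℝ) : ℝ :=
  sInf {s | ∃ p : Corr n, IsVect p ∧ IsSync p ∧ HasMarginals p t ∧ s = Fval G p}

/-- A graph automorphism of `G`, as a permutation preserving adjacency in both directions. -/
def IsGraphAut {n : ℕ} (G : SimpleGraph (Fin n)) (π : Equiv.Perm (Fin n)) : Prop :=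
  ∀ v w, G.Adj v w ↔ G.Adj (π v) (π w)

/-- Vertex transitivity. -/
def VertexTransitive {n : ℕ} (G : SimpleGraph (Fin n)) : Prop :=
  ∀ v w, ∃ π : Equiv.Perm (Fin n), IsGraphAut G π ∧ π v = w

/-- Edge transitivity. -/
def EdgeTransitive {n : ℕ} (G : SimpleGraph (Fin n)) : Prop :=
  ∀ v w x y, G.Adj v w → G.Adj x y →
    ∃ π : Equiv.Perm (Fin n), IsGraphAut G π ∧ π v = x ∧ π w = y

/-!
A synchronous vectorial correlation with marginals `t` is governed by the Gram matrix of `h` and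
the vectors `x v 0` (synchronicity forces `x v 0 = y v 0`): it lies in the spectrahedron of the
statement and its off-border entries are the values `p(0,0|v,w)`. Averaging this matrix over the
automorphism group of `G` keeps it in that convex set and preserves the sum over the edges, while
edge transitivity makes all edge entries equal; so every value `F(p)` lies in `S`. Conversely,
every matrix of the spectrahedron is a Gram matrix, which defines a correlation realizing `s`.
Hence `f_vect(t) = inf S`, and `S` is nonempty and compact, so the infimum is attained.
-/

open Matrix Equiv
open scoped RealInnerProductSpace

theorem Matrix.isClosed_setOf_posSemidef {ι : Type*} [Fintype ι] :
    IsClosed {M : Matrix ι ι ℝ | M.PosSemidef} := by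
  simp only [posSemidef_iff_dotProduct_mulVec, IsHermitian, Set.ofPred_and, Set.ofPred_forall]
  exact (isClosed_eq (by fun_prop) continuous_id).inter
    (isClosed_iInter fun x => isClosed_le continuous_const (by fun_prop))

theorem Matrix.PosSemidef.exists_eq_gram {ι : Type*} [Fintype ι] {M : Matrix ι ι ℝ}
    (hM : M.PosSemidef) :
    ∃ (m : ℕ) (u : ι → EuclideanSpace ℝ (Fin m)), M = gram ℝ u := by
  obtain ⟨m, v, rfl⟩ := posSemidef_iff_eq_sum_vecMulVec.mp hM
  refine ⟨m, fun i => WithLp.toLp 2 fun k => v k i, ?_⟩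
  ext i j
  simp [gram_apply, vecMulVec_apply, sum_apply, PiLp.inner_apply, mul_comm]

section

variable {n : ℕ}

attribute [local instance] VectRealization.nacg VectRealization.ips

def spectrahedron (n : ℕ) (t : ℝ) : Set (Matrix (Fin (n + 1)) (Fin (n + 1)) ℝ) :=
  {P | P.PosSemidef ∧ P 0 0 = 1 ∧
    (∀ j : Fin n, P 0 j.succ = t ∧ P j.succ 0 = t ∧ P j.succ j.succ = t) ∧
    (∀ i j : Fin n, i ≠ j → max 0 (2 * t - 1) ≤ P i.succ j.succ ∧ P i.succ j.succ ≤ t)}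

def sdpValues (G : SimpleGraph (Fin n)) [DecidableRel G.Adj] (t : ℝ) : Set ℝ :=
  {s : ℝ |
    max 0 (((edgeFinset' G).card : ℝ) * (2 * t - 1)) ≤ s ∧
    s ≤ ((edgeFinset' G).card : ℝ) * t ∧
    ∃ P : Matrix (Fin (n + 1)) (Fin (n + 1)) ℝ,
      P.PosSemidef ∧
      P 0 0 = 1 ∧
      (∀ j : Fin n, P 0 j.succ = t ∧ P j.succ 0 = t ∧ P j.succ j.succ = t) ∧
      (∀ i j : Fin n, i ≠ j →
        max 0 (2 * t - 1) ≤ P i.succ j.succ ∧ P i.succ j.succ ≤ t) ∧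
      (∀ i j : Fin n, G.Adj i j →
        P i.succ j.succ = s / ((edgeFinset' G).card : ℝ))}

theorem mem_sdpValues {G : SimpleGraph (Fin n)} [DecidableRel G.Adj] {t s : ℝ} :
    s ∈ sdpValues G t ↔
      s ∈ Set.Icc (max 0 ((edgeFinset' G).card * (2 * t - 1))) ((edgeFinset' G).card * t) ∧
      ∃ P ∈ spectrahedron n t, ∀ i j : Fin n, G.Adj i j →
        P i.succ j.succ = s / (edgeFinset' G).card := by
  simp only [sdpValues, spectrahedron, Set.mem_ofPred_eq, Set.mem_Icc, and_assoc]

theorem apply_succ_succ_mem_Icc_of_mem_spectrahedron {t : ℝ} (ht : t ∈ Set.Icc (0 : ℝ) 1)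
    {P : Matrix (Fin (n + 1)) (Fin (n + 1)) ℝ} (hP : P ∈ spectrahedron n t) (v w : Fin n) :
    P v.succ w.succ ∈ Set.Icc (max 0 (2 * t - 1)) t := by
  obtain rfl | hvw := eq_or_ne v w
  · rw [(hP.2.2.1 v).2.2]
    exact ⟨max_le ht.1 (by linarith [ht.2]), le_rfl⟩
  · exact hP.2.2.2 v w hvw

theorem spectrahedron_subset_pi {t : ℝ} (ht : t ∈ Set.Icc (0 : ℝ) 1) :
    spectrahedron n t ⊆ Set.univ.pi fun _ => Set.univ.pi fun _ => Set.Icc 0 1 := by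
  intro P hP i _ j _
  have h0 : (0 : ℝ) ≤ max 0 (2 * t - 1) := le_max_left _ _
  induction i using Fin.cases <;> induction j using Fin.cases
  · simp [hP.2.1]
  · simp [(hP.2.2.1 _).1, ht.1, ht.2]
  · simp [(hP.2.2.1 _).2.1, ht.1, ht.2]
  · rename_i v _ w _
    have := apply_succ_succ_mem_Icc_of_mem_spectrahedron ht hP v w
    exact ⟨h0.trans this.1, this.2.trans ht.2⟩

theorem isCompact_spectrahedron {t : ℝ} (ht : t ∈ Set.Icc (0 : ℝ) 1) :
    IsCompact (spectrahedron n t) := by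
  refine (isCompact_univ_pi fun _ => isCompact_univ_pi fun _ => isCompact_Icc).of_isClosed_subset
    ?_ (spectrahedron_subset_pi ht)
  simp only [spectrahedron, Set.ofPred_and, Set.ofPred_forall]
  have entry (i j : Fin (n + 1)) :
      Continuous fun P : Matrix (Fin (n + 1)) (Fin (n + 1)) ℝ => P i j :=
    continuous_id.matrix_elem i j
  refine isClosed_setOf_posSemidef.inter ((isClosed_eq (entry 0 0) continuous_const).inter
    ((isClosed_iInter fun j => ?_).inter (isClosed_iInter fun i => isClosed_iInter fun j =>
      isClosed_iInter fun _ => ?_)))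
  · exact (isClosed_eq (entry _ _) continuous_const).inter
      ((isClosed_eq (entry _ _) continuous_const).inter (isClosed_eq (entry _ _) continuous_const))
  · exact (isClosed_le continuous_const (entry _ _)).inter
      (isClosed_le (entry _ _) continuous_const)

def autGroup (G : SimpleGraph (Fin n)) : Subgroup (Perm (Fin n)) where
  carrier := {π | IsGraphAut G π}
  one_mem' _ _ := Iff.rfl
  mul_mem' hπ hσ v w := (hσ v w).trans (hπ _ _)
  inv_mem' {π} hπ v w := by simpa using (hπ (π⁻¹ v) (π⁻¹ w)).symm

theorem sum_edgeFinset'_comp_aut {G : SimpleGraph (Fin n)} [DecidableRel G.Adj]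
    {π : Perm (Fin n)} (hπ : IsGraphAut G π) (g : Fin n → Fin n → ℝ) :
    ∑ e ∈ edgeFinset' G, g (π e.1) (π e.2) = ∑ e ∈ edgeFinset' G, g e.1 e.2 := by
  simp only [edgeFinset', Finset.sum_filter]
  exact Fintype.sum_equiv (π.prodCongr π) _ _ fun e => by simp [hπ e.1 e.2]

theorem EdgeTransitive.eq_sum_div_card {G : SimpleGraph (Fin n)} [DecidableRel G.Adj]
    (het : EdgeTransitive G) {M : Fin n → Fin n → ℝ}
    (hM : ∀ σ ∈ autGroup G, ∀ v w, M (σ v) (σ w) = M v w) {v w : Fin n} (hvw : G.Adj v w) :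
    M v w = (∑ e ∈ edgeFinset' G, M e.1 e.2) / (edgeFinset' G).card := by
  have hconst : ∀ e ∈ edgeFinset' G, M e.1 e.2 = M v w := by
    rintro ⟨x, y⟩ he
    obtain ⟨σ, hσ, rfl, rfl⟩ := het v w x y hvw (by simpa [edgeFinset'] using he)
    exact hM σ hσ v w
  have hcard : ((edgeFinset' G).card : ℝ) ≠ 0 := by
    exact_mod_cast (Finset.card_pos.mpr ⟨(v, w), by simpa [edgeFinset'] using hvw⟩).ne'
  rw [Finset.sum_eq_card_nsmul hconst, nsmul_eq_mul, mul_div_cancel_left₀ _ hcard]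

def borderedPerm (π : Perm (Fin n)) : Fin (n + 1) → Fin (n + 1) :=
  Fin.cases 0 fun v => (π v).succ

@[simp] theorem borderedPerm_zero (π : Perm (Fin n)) : borderedPerm π 0 = 0 := rfl

@[simp] theorem borderedPerm_succ (π : Perm (Fin n)) (v : Fin n) :
    borderedPerm π v.succ = (π v).succ := rfl

theorem borderedPerm_mul (π σ : Perm (Fin n)) (i : Fin (n + 1)) :
    borderedPerm (π * σ) i = borderedPerm π (borderedPerm σ i) :=
  i.cases rfl fun _ => rfl

theorem submatrix_borderedPerm_mem_spectrahedron {t : ℝ}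
    {P : Matrix (Fin (n + 1)) (Fin (n + 1)) ℝ} (hP : P ∈ spectrahedron n t)
    (π : Perm (Fin n)) :
    P.submatrix (borderedPerm π) (borderedPerm π) ∈ spectrahedron n t := by
  obtain ⟨hpsd, h00, hborder, hoff⟩ := hP
  refine ⟨hpsd.submatrix _, h00, fun j => ?_, fun i j hij => ?_⟩
  · simpa using hborder (π j)
  · simpa using hoff (π i) (π j) (π.injective.ne hij)

theorem convex_spectrahedron (t : ℝ) : Convex ℝ (spectrahedron n t) := by
  rintro P ⟨hP, hP00, hPb, hPo⟩ Q ⟨hQ, hQ00, hQb, hQo⟩ a b ha hb hab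
  refine ⟨(hP.smul ha).add (hQ.smul hb), ?_, fun j => ?_, fun i j hij => ?_⟩
  · simp [hP00, hQ00, hab]
  · simp only [Matrix.add_apply, Matrix.smul_apply, smul_eq_mul, (hPb j).1, (hPb j).2.1,
      (hPb j).2.2, (hQb j).1, (hQb j).2.1, (hQb j).2.2, ← add_mul, hab, one_mul, and_self]
  · exact convex_Icc _ _ (hPo i j hij) (hQo i j hij) ha hb hab

section Symmetrize

variable (H : Subgroup (Perm (Fin n))) [Fintype H]

noncomputable def symmetrize (Q : Matrix (Fin (n + 1)) (Fin (n + 1)) ℝ) :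
    Matrix (Fin (n + 1)) (Fin (n + 1)) ℝ :=
  ∑ π : H, (Fintype.card H : ℝ)⁻¹ • Q.submatrix (borderedPerm π) (borderedPerm π)

variable {H}

theorem symmetrize_apply (Q : Matrix (Fin (n + 1)) (Fin (n + 1)) ℝ) (i j : Fin (n + 1)) :
    symmetrize H Q i j =
      (Fintype.card H : ℝ)⁻¹ * ∑ π : H, Q (borderedPerm π i) (borderedPerm π j) := by
  simp [symmetrize, Matrix.sum_apply, Finset.mul_sum]

theorem symmetrize_mem {V : Set (Matrix (Fin (n + 1)) (Fin (n + 1)) ℝ)} (hV : Convex ℝ V)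
    (hVinv : ∀ (π : Perm (Fin n)), ∀ Q ∈ V,
      Q.submatrix (borderedPerm π) (borderedPerm π) ∈ V)
    {Q : Matrix (Fin (n + 1)) (Fin (n + 1)) ℝ} (hQ : Q ∈ V) : symmetrize H Q ∈ V := by
  refine hV.sum_mem (fun _ _ => by positivity) ?_ fun π _ => hVinv π Q hQ
  simp [Finset.card_univ]

theorem symmetrize_apply_borderedPerm (Q : Matrix (Fin (n + 1)) (Fin (n + 1)) ℝ)
    {σ : Perm (Fin n)} (hσ : σ ∈ H) (i j : Fin (n + 1)) :
    symmetrize H Q (borderedPerm σ i) (borderedPerm σ j) = symmetrize H Q i j := by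
  simp only [symmetrize_apply, ← borderedPerm_mul]
  congr 1
  exact Fintype.sum_equiv (Equiv.mulRight ⟨σ, hσ⟩) _ _ fun _ => rfl

theorem sum_edgeFinset'_symmetrize {G : SimpleGraph (Fin n)} [DecidableRel G.Adj]
    (hH : H ≤ autGroup G) (Q : Matrix (Fin (n + 1)) (Fin (n + 1)) ℝ) :
    ∑ e ∈ edgeFinset' G, symmetrize H Q e.1.succ e.2.succ =
      ∑ e ∈ edgeFinset' G, Q e.1.succ e.2.succ := by
  simp only [symmetrize_apply, borderedPerm_succ, ← Finset.mul_sum]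
  rw [Finset.sum_comm]
  simp only [fun π : H => sum_edgeFinset'_comp_aut (hH π.2) fun v w => Q v.succ w.succ]
  simp [Finset.card_univ]

end Symmetrize

theorem HasMarginals.row {p : Corr n} {t : ℝ} (hm : HasMarginals p t) (v w : Fin n) :
    p 0 0 v w + p 0 1 v w = t := by
  simpa [Fin.sum_univ_two] using hm.1 v w

theorem HasMarginals.col {p : Corr n} {t : ℝ} (hm : HasMarginals p t) (v w : Fin n) :
    p 0 0 v w + p 1 0 v w = t := by
  simpa [Fin.sum_univ_two] using hm.2 v w

namespace VectRealization

variable {p : Corr n}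

theorem sum_eq_one (R : VectRealization n p) (v w : Fin n) :
    p 0 0 v w + p 0 1 v w + p 1 0 v w + p 1 1 v w = 1 := by
  have h : inner ℝ (R.x v 0 + R.x v 1) (R.y w 0 + R.y w 1) = 1 := by
    rw [R.hxsum, R.hysum, real_inner_self_eq_norm_sq, R.hnorm, one_pow]
  simp only [inner_add_left, inner_add_right, ← R.hval] at h
  linarith

theorem apply_zero_zero_mem_Icc (R : VectRealization n p) {t : ℝ} (hm : HasMarginals p t)
    (v w : Fin n) : p 0 0 v w ∈ Set.Icc (max 0 (2 * t - 1)) t := by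
  refine ⟨max_le (R.hnn 0 0 v w) ?_, by linarith [hm.row v w, R.hnn 0 1 v w]⟩
  linarith [R.sum_eq_one v w, hm.row v w, hm.col v w, R.hnn 1 1 v w]

-- `x v 0 - y v 0 = y v 1 - x v 1`, so its squared norm is `p(0,1|v,v) + p(1,0|v,v) = 0`.
theorem x_zero_eq_y_zero (R : VectRealization n p) (hs : IsSync p) (v : Fin n) :
    R.x v 0 = R.y v 0 := by
  have hdiff : R.x v 0 - R.y v 0 = R.y v 1 - R.x v 1 := by
    rw [sub_eq_sub_iff_add_eq_add, R.hxsum, add_comm, R.hysum]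
  have : inner ℝ (R.x v 0 - R.y v 0) (R.x v 0 - R.y v 0) = 0 := by
    conv_lhs => arg 3; rw [hdiff]
    simp only [inner_sub_left, inner_sub_right, R.hxorth, R.hyorth,
      real_inner_comm (R.x v 1) (R.y v 0), ← R.hval, (hs v).1, (hs v).2]
    ring
  exact sub_eq_zero.mp (inner_self_eq_zero.mp this)

theorem inner_x_zero_h (R : VectRealization n p) {t : ℝ} (hm : HasMarginals p t) (v : Fin n) :
    inner ℝ (R.x v 0) R.h = t := by
  rw [← R.hysum v, inner_add_right, ← R.hval, ← R.hval, hm.row]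

def borderedVectors (R : VectRealization n p) : Fin (n + 1) → R.H :=
  Fin.cons R.h fun v => R.x v 0

theorem gram_borderedVectors_succ_succ (R : VectRealization n p) (hs : IsSync p) (v w : Fin n) :
    gram ℝ R.borderedVectors v.succ w.succ = p 0 0 v w := by
  simp only [borderedVectors, gram_apply, Fin.cons_succ, R.x_zero_eq_y_zero hs w, R.hval]

theorem gram_borderedVectors_mem_spectrahedron (R : VectRealization n p) {t : ℝ} (hs : IsSync p)
    (hm : HasMarginals p t) : gram ℝ R.borderedVectors ∈ spectrahedron n t := by
  refine ⟨posSemidef_gram ℝ _, ?_, fun j => ⟨?_, ?_, ?_⟩, fun i j _ => ?_⟩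
  · simp [borderedVectors, gram_apply, R.hnorm]
  · simp only [borderedVectors, gram_apply, Fin.cons_zero, Fin.cons_succ,
      real_inner_comm (R.x j 0) R.h, R.inner_x_zero_h hm]
  · simp only [borderedVectors, gram_apply, Fin.cons_zero, Fin.cons_succ, R.inner_x_zero_h hm]
  · rw [R.gram_borderedVectors_succ_succ hs, ← hm.row j j, (hs j).1, add_zero]
  · rw [R.gram_borderedVectors_succ_succ hs]
    exact R.apply_zero_zero_mem_Icc hm i j

end VectRealization

section MatrixCorr

variable {t : ℝ} {P : Matrix (Fin (n + 1)) (Fin (n + 1)) ℝ}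

def matrixCorr (t : ℝ) (P : Matrix (Fin (n + 1)) (Fin (n + 1)) ℝ) : Corr n :=
  fun i j v w => ![![P v.succ w.succ, t - P v.succ w.succ],
    ![t - P v.succ w.succ, 1 - 2 * t + P v.succ w.succ]] i j

theorem isSync_matrixCorr (hP : P ∈ spectrahedron n t) : IsSync (matrixCorr t P) := fun v => by
  simp [matrixCorr, (hP.2.2.1 v).2.2]

theorem hasMarginals_matrixCorr : HasMarginals (matrixCorr t P) t :=
  ⟨fun v w => by simp [matrixCorr], fun v w => by simp [matrixCorr]⟩

theorem matrixCorr_nonneg (ht : t ∈ Set.Icc (0 : ℝ) 1) (hP : P ∈ spectrahedron n t)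
    (i j : Fin 2) (v w : Fin n) : 0 ≤ matrixCorr t P i j v w := by
  obtain ⟨hlo, hhi⟩ := apply_succ_succ_mem_Icc_of_mem_spectrahedron ht hP v w
  have h0 := le_max_left 0 (2 * t - 1)
  have h1 := le_max_right 0 (2 * t - 1)
  fin_cases i <;> fin_cases j <;> simp [matrixCorr] <;> linarith

theorem isVect_matrixCorr (ht : t ∈ Set.Icc (0 : ℝ) 1) (hP : P ∈ spectrahedron n t) :
    IsVect (matrixCorr t P) := by
  obtain ⟨m, u, rfl⟩ := hP.1.exists_eq_gram
  obtain ⟨hpsd, h00, hborder, hoff⟩ := hP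
  have hu (i j : Fin (n + 1)) : inner ℝ (u i) (u j) = gram ℝ u i j := rfl
  have horth (v : Fin n) : inner ℝ (u v.succ) (u 0 - u v.succ) = 0 := by
    rw [inner_sub_right, hu, hu, (hborder v).2.1, (hborder v).2.2, sub_self]
  have hnorm : ‖u 0‖ = 1 := by rw [norm_eq_sqrt_real_inner, hu, h00, Real.sqrt_one]
  refine ⟨{
    H := EuclideanSpace ℝ (Fin m)
    x := fun v => ![u v.succ, u 0 - u v.succ]
    y := fun v => ![u v.succ, u 0 - u v.succ]
    h := u 0
    hnorm := hnorm
    hxorth := horth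
    hyorth := horth
    hxsum := fun v => add_sub_cancel _ _
    hysum := fun v => add_sub_cancel _ _
    hval := fun i j v w => ?_
    hnn := matrixCorr_nonneg ht ⟨hpsd, h00, hborder, hoff⟩ }⟩
  fin_cases i <;> fin_cases j <;>
    simp [matrixCorr, inner_sub_left, inner_sub_right, hu, -gram_apply, hnorm, (hborder v).2.1,
      (hborder w).1]
  ring

end MatrixCorr

section Values

variable {G : SimpleGraph (Fin n)} [DecidableRel G.Adj] {t : ℝ}

theorem mem_sdpValues_of (hE : 0 < (edgeFinset' G).card) {s : ℝ}
    {P : Matrix (Fin (n + 1)) (Fin (n + 1)) ℝ} (hP : P ∈ spectrahedron n t)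
    (hedge : ∀ i j : Fin n, G.Adj i j → P i.succ j.succ = s / (edgeFinset' G).card) :
    s ∈ sdpValues G t := by
  obtain ⟨⟨v, w⟩, hvw⟩ := Finset.card_pos.mp hE
  have hvw : G.Adj v w := by simpa [edgeFinset'] using hvw
  have hcard : (0 : ℝ) < (edgeFinset' G).card := by exact_mod_cast hE
  obtain ⟨hlo, hhi⟩ := hP.2.2.2 v w (G.ne_of_adj hvw)
  rw [hedge v w hvw, le_div_iff₀ hcard] at hlo
  rw [hedge v w hvw, div_le_iff₀ hcard] at hhi
  have h0 := le_max_left 0 (2 * t - 1)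
  have h1 := le_max_right 0 (2 * t - 1)
  refine mem_sdpValues.mpr ⟨⟨max_le ?_ ?_, ?_⟩, P, hP, hedge⟩ <;> nlinarith

theorem fval_mem_sdpValues (hE : 0 < (edgeFinset' G).card) (het : EdgeTransitive G)
    {p : Corr n} (R : VectRealization n p) (hs : IsSync p) (hm : HasMarginals p t) :
    Fval G p ∈ sdpValues G t := by
  classical
  set P := symmetrize (autGroup G) (gram ℝ R.borderedVectors)
  have hP : P ∈ spectrahedron n t :=
    symmetrize_mem (convex_spectrahedron t)
      (fun π _ hQ => submatrix_borderedPerm_mem_spectrahedron hQ π)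
      (R.gram_borderedVectors_mem_spectrahedron hs hm)
  have hF : Fval G p = ∑ e ∈ edgeFinset' G, P e.1.succ e.2.succ := by
    simp only [P, sum_edgeFinset'_symmetrize le_rfl, R.gram_borderedVectors_succ_succ hs, Fval]
  refine mem_sdpValues_of hE hP fun v w hvw => hF ▸ ?_
  exact het.eq_sum_div_card (M := fun v w => P v.succ w.succ)
    (fun σ hσ v w => symmetrize_apply_borderedPerm _ hσ v.succ w.succ) hvw

theorem exists_corr_of_mem_sdpValues (hE : 0 < (edgeFinset' G).card)
    (ht : t ∈ Set.Icc (0 : ℝ) 1) {s : ℝ} (hs : s ∈ sdpValues G t) :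
    ∃ p : Corr n, IsVect p ∧ IsSync p ∧ HasMarginals p t ∧ s = Fval G p := by
  obtain ⟨-, P, hP, hedge⟩ := mem_sdpValues.mp hs
  refine ⟨matrixCorr t P, isVect_matrixCorr ht hP, isSync_matrixCorr hP,
    hasMarginals_matrixCorr, ?_⟩
  have hcard : ((edgeFinset' G).card : ℝ) ≠ 0 := by exact_mod_cast hE.ne'
  have hconst : ∀ e ∈ edgeFinset' G, matrixCorr t P 0 0 e.1 e.2 = s / (edgeFinset' G).card :=
    fun e he => hedge e.1 e.2 (by simpa [edgeFinset'] using he)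
  rw [Fval, Finset.sum_eq_card_nsmul hconst, nsmul_eq_mul, mul_div_cancel₀ _ hcard]

theorem setOf_fval_eq_sdpValues (hE : 0 < (edgeFinset' G).card) (het : EdgeTransitive G)
    (ht : t ∈ Set.Icc (0 : ℝ) 1) :
    {s | ∃ p : Corr n, IsVect p ∧ IsSync p ∧ HasMarginals p t ∧ s = Fval G p} =
      sdpValues G t := by
  ext s
  constructor
  · rintro ⟨p, ⟨R⟩, hs, hm, rfl⟩
    exact fval_mem_sdpValues hE het R hs hm
  · exact exists_corr_of_mem_sdpValues hE ht

-- The witness is the moment matrix of two independent coins of bias `t`.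
theorem sdpValues_nonempty (hE : 0 < (edgeFinset' G).card) (ht : t ∈ Set.Icc (0 : ℝ) 1) :
    (sdpValues G t).Nonempty := by
  obtain ⟨ht0, ht1⟩ := ht
  set w : Fin (n + 1) → ℝ := Fin.cons 1 fun _ => t
  set d : Fin (n + 1) → ℝ := Fin.cons 0 fun _ => t - t ^ 2
  have hoff {i j : Fin n} (hij : i ≠ j) :
      (vecMulVec w w + diagonal d) i.succ j.succ = t ^ 2 := by
    simp [w, d, vecMulVec_apply, hij, sq]
  have hP : vecMulVec w w + diagonal d ∈ spectrahedron n t := by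
    have hd : 0 ≤ d := Fin.cases le_rfl fun _ => sub_nonneg.mpr (by nlinarith)
    refine ⟨(posSemidef_vecMulVec_self_star w).add (PosSemidef.diagonal hd), ?_,
      fun j => ?_, fun i j hij => ?_⟩
    · simp [w, d, vecMulVec_apply]
    · simp [w, d, vecMulVec_apply, (Fin.succ_ne_zero j).symm, sq]
    · rw [hoff hij]
      exact ⟨max_le (by positivity) (by nlinarith), by nlinarith⟩
  have hcard : ((edgeFinset' G).card : ℝ) ≠ 0 := by exact_mod_cast hE.ne'
  exact ⟨_, mem_sdpValues_of hE hP fun i j hij => by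
    rw [hoff (G.ne_of_adj hij), mul_div_cancel_left₀ _ hcard]⟩

theorem isCompact_sdpValues (ht : t ∈ Set.Icc (0 : ℝ) 1) : IsCompact (sdpValues G t) := by
  set E : ℝ := ((edgeFinset' G).card : ℝ)
  have hK : IsCompact (Set.Icc (max 0 (E * (2 * t - 1))) (E * t) ×ˢ spectrahedron n t ∩
      {sP | ∀ i j : Fin n, G.Adj i j → sP.2 i.succ j.succ = sP.1 / E}) := by
    refine (isCompact_Icc.prod (isCompact_spectrahedron ht)).inter_right ?_
    simp only [Set.ofPred_forall]
    exact isClosed_iInter fun i => isClosed_iInter fun j => isClosed_iInter fun _ =>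
      isClosed_eq (continuous_snd.matrix_elem _ _) (continuous_fst.div_const E)
  convert hK.image continuous_fst
  ext s
  simp [mem_sdpValues, E, and_assoc]

end Values

end

theorem stmt7_general {n : ℕ} (G : SimpleGraph (Fin n)) [DecidableRel G.Adj]
    (hE : 0 < (edgeFinset' G).card)
    (het : EdgeTransitive G)
    (t : ℝ) (ht : t ∈ Set.Icc (0 : ℝ) 1) :
    IsLeast
      {s : ℝ |
        max 0 (((edgeFinset' G).card : ℝ) * (2 * t - 1)) ≤ s ∧
        s ≤ ((edgeFinset' G).card : ℝ) * t ∧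
        ∃ P : Matrix (Fin (n + 1)) (Fin (n + 1)) ℝ,
          P.PosSemidef ∧
          P 0 0 = 1 ∧
          (∀ j : Fin n, P 0 j.succ = t ∧ P j.succ 0 = t ∧ P j.succ j.succ = t) ∧
          (∀ i j : Fin n, i ≠ j →
            max 0 (2 * t - 1) ≤ P i.succ j.succ ∧ P i.succ j.succ ≤ t) ∧
          (∀ i j : Fin n, G.Adj i j →
            P i.succ j.succ = s / ((edgeFinset' G).card : ℝ))}
      (fvect G t) := by
  rw [fvect, setOf_fval_eq_sdpValues hE het ht]
  exact (isCompact_sdpValues ht).isLeast_sInf (sdpValues_nonempty hE ht)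

theorem stmt7 {n : ℕ} (hn : 1 ≤ n) (G : SimpleGraph (Fin n)) [DecidableRel G.Adj]
    (hE : 0 < (edgeFinset' G).card)
    (hvt : VertexTransitive G) (het : EdgeTransitive G)
    (t : ℝ) (ht : t ∈ Set.Icc (0 : ℝ) 1) :
    IsLeast
      {s : ℝ |
        max 0 (((edgeFinset' G).card : ℝ) * (2 * t - 1)) ≤ s ∧
        s ≤ ((edgeFinset' G).card : ℝ) * t ∧
        ∃ P : Matrix (Fin (n + 1)) (Fin (n + 1)) ℝ,
          P.PosSemidef ∧
          P 0 0 = 1 ∧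
          (∀ j : Fin n, P 0 j.succ = t ∧ P j.succ 0 = t ∧ P j.succ j.succ = t) ∧
          (∀ i j : Fin n, i ≠ j →
            max 0 (2 * t - 1) ≤ P i.succ j.succ ∧ P i.succ j.succ ≤ t) ∧
          (∀ i j : Fin n, G.Adj i j →
            P i.succ j.succ = s / ((edgeFinset' G).card : ℝ))}
      (fvect G t) :=
  stmt7_general G hE het t ht
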